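/- Fix μ ∈ Δ(S) and assume: for every family (a_t)_{t∈T} with a_t ∈ A such that there exists ν ∈ Δ(S) with a_t ∈ A*_t(ν) for all t ∈ T, there exists ν̃ ∈ Δ(S) with supp(ν̃) ⊆ supp(μ) and A*_t(ν̃) = {a_t} for all t ∈ T. Then there exists a family (τ^ε)_{ε>0} ⊂ T_μ such that ∫_{Δ(S)} W^ε(ν) dτ^ε(ν) → W̄* = sup_{τ ∈ T_μ} ∫_{Δ(S)} W(ν) dτ(ν) as ε → 0⁺. -/

import Mathlib

open MeasureTheory Finset

noncomputable section

/-- Expected utility `Σ_s u(s,a) ν(s)` of action `a` under belief `ν ∈ Δ(S)`. -/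
def expUtil {S α : Type*} [Fintype S] (u : S → α → ℝ) (ν : stdSimplex ℝ S) (a : α) : ℝ :=
  ∑ s, u s a * (ν : S → ℝ) s

/-- Admissible (optimal) actions `A*(ν) = argmax_a Σ_s u(s,a) ν(s)`. -/
def admissible {S α : Type*} [Fintype S] (u : S → α → ℝ) (ν : stdSimplex ℝ S) : Set α :=
  {a | ∀ b, expUtil u ν b ≤ expUtil u ν a}

/-- The sender's gain
`W(ν) = Σ_t η(t) · max_{a ∈ A*_t(ν)} Σ_s v(s,a) ν(s)` (ties broken in the sender's favor);
the maximum over the (finite nonempty) set of admissible action profiles is expressed as a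
supremum. -/
def senderGain {S L : Type*} [Fintype S] [Fintype L] [DecidableEq L]
    {A T : L → Type*} [∀ l, Fintype (A l)] [∀ l, Fintype (T l)]
    (u : ∀ l, T l → S → A l → ℝ) (v : S → (∀ l, A l) → ℝ) (η : ∀ l, T l → ℝ)
    (ν : stdSimplex ℝ S) : ℝ :=
  ∑ t : ∀ l, T l, (∏ l, η l (t l)) *
    sSup {x : ℝ | ∃ a : ∀ l, A l, (∀ l, a l ∈ admissible (u l (t l)) ν) ∧
      x = ∑ s, v s a * (ν : S → ℝ) s}

/-- `T_μ` : Borel probability measures on `Δ(S)` with barycenter `μ`, with the topology of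
weak convergence. -/
def barycentric {S : Type*} [Fintype S] (μ : stdSimplex ℝ S) :
    Set (ProbabilityMeasure (stdSimplex ℝ S)) :=
  {τ | ∀ s : S, (∫ ν, (ν : S → ℝ) s ∂(τ : Measure (stdSimplex ℝ S))) = (μ : S → ℝ) s}

/-- The regularized (Gibbs/softmax) strategy of a receiver with utility `u`, reference
("irrational") strategy `lam` and regularization parameter `ε`, under belief `ν`. -/
def regStrategy {S α : Type*} [Fintype S] [Fintype α] (u : S → α → ℝ) (lam : α → ℝ)
    (ε : ℝ) (ν : stdSimplex ℝ S) (a : α) : ℝ :=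
  lam a * Real.exp (expUtil u ν a / ε) / ∑ b, lam b * Real.exp (expUtil u ν b / ε)

/-- The regularized sender gain
`W^ε(ν) = Σ_t η(t) Σ_s Σ_a v(s,a) ν(s) Π_ℓ θ^ε_{t_ℓ,ν}(a_ℓ)`. -/
def regSenderGain {S L : Type*} [Fintype S] [Fintype L] [DecidableEq L]
    {A T : L → Type*} [∀ l, Fintype (A l)] [∀ l, Fintype (T l)]
    (u : ∀ l, T l → S → A l → ℝ) (v : S → (∀ l, A l) → ℝ) (η : ∀ l, T l → ℝ)
    (lam : ∀ l, A l → ℝ) (ε : ℝ) (ν : stdSimplex ℝ S) : ℝ :=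
  ∑ t : ∀ l, T l, (∏ l, η l (t l)) *
    ∑ s, ∑ a : ∀ l, A l,
      v s a * (ν : S → ℝ) s * ∏ l, regStrategy (u l (t l)) (lam l) ε ν (a l)

/-- **Assumption (reg).** Every action profile family `(a_t)_t` that is admissible under some
prior is the unique admissible profile family under some prior supported inside `supp(μ)`. -/
def regAssumption {S L : Type*} [Fintype S] [Fintype L]
    {A T : L → Type*}
    (u : ∀ l, T l → S → A l → ℝ) (μ : stdSimplex ℝ S) : Prop :=
  ∀ a : (∀ l, T l) → (∀ l, A l),
    (∃ ν : stdSimplex ℝ S, ∀ t : ∀ l, T l, ∀ l, a t l ∈ admissible (u l (t l)) ν) →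
    ∃ ν' : stdSimplex ℝ S, (∀ s, 0 < (ν' : S → ℝ) s → 0 < (μ : S → ℝ) s) ∧
      ∀ t : ∀ l, T l, {b : ∀ l, A l | ∀ l, b l ∈ admissible (u l (t l)) ν'} = {a t}

/-!
Push a measure `τ ∈ T_μ` forward along a measurable map moving each belief `ν` a small fraction
towards a prior, supported in `supp μ` and provided by the assumption, at which a sender-optimal
best response at `ν` becomes the unique best response. This changes `∫ W dτ` by `O(β)`, and at
beliefs with unique best responses `W^ε → W`, so dominated convergence controls the regularized
gains. An atom of weight `β` restores the barycenter `μ` and costs another `O(β)`. Letting `β → 0`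
along a diagonal sequence in `ε` gives the family.
-/

open Filter Topology

theorem Filter.exists_tendsto_of_forall_eventually_dist_lt {α β γ : Type*}
    [PseudoMetricSpace γ] {l : Filter α} [l.IsCountablyGenerated] (hl : l.ker = ∅)
    {B : Set β} {f : α → β → γ} {y : γ}
    (h : ∀ δ > 0, ∃ b ∈ B, ∀ᶠ a in l, dist (f a b) y < δ) :
    ∃ g : α → β, (∀ a, g a ∈ B) ∧ Tendsto (fun a => f a (g a)) l (𝓝 y) := by
  classical
  choose b hbB hb using fun n : ℕ => h (1 / (n + 1)) Nat.one_div_pos_of_nat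
  obtain ⟨s, hs⟩ := l.exists_antitone_basis
  -- `D n` shrinks to the empty set, so every `a` leaves it at a first index `N a`
  set D : ℕ → Set α := fun n => ⋂ k ≤ n, s k ∩ {a | dist (f a (b k)) y < 1 / (k + 1)}
  have hD : Antitone D := fun m n hmn => Set.biInter_mono (fun k hk => le_trans hk hmn)
    fun _ _ => subset_rfl
  have hDl : ∀ n, D n ∈ l := fun n =>
    (biInter_mem (Set.finite_le_nat n)).2 fun k _ => inter_mem (hs.mem k) (hb k)
  have hleave : ∀ a, ∃ n, a ∉ D (n + 1) := by
    intro a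
    by_contra! hin
    have : a ∈ l.ker := by
      rw [hs.ker, Set.mem_iInter₂]
      exact fun k _ => (Set.mem_iInter₂.1 (hin k) k (by omega)).1
    simp [hl] at this
  let N a := Nat.find (hleave a)
  refine ⟨fun a => b (N a), fun a => hbB _, Metric.tendsto_nhds.2 fun δ hδ => ?_⟩
  obtain ⟨n, hn⟩ := exists_nat_one_div_lt hδ
  filter_upwards [hDl n] with a ha
  have hNn : n ≤ N a := by
    by_contra! hlt
    exact Nat.find_spec (hleave a) (hD (Nat.succ_le_of_lt hlt) ha)
  have hND : a ∈ D (N a) := by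
    rcases hNa : N a with _ | k
    · exact hD (Nat.zero_le n) ha
    · exact not_not.1 (Nat.find_min (hleave a) (show k < N a by omega))
  calc dist (f a (b (N a))) y < 1 / (N a + 1) := (Set.mem_iInter₂.1 hND (N a) le_rfl).2
    _ ≤ 1 / (n + 1) := by gcongr
    _ < δ := hn

theorem ker_nhdsGT_zero : (𝓝[>] (0 : ℝ)).ker = ∅ := by
  simp [nhdsWithin, Filter.ker_inf, ker_nhds]

theorem MeasureTheory.exists_measurable_selection {α ι β : Type*} [MeasurableSpace α]
    [MeasurableSpace β] [Countable ι] [Nonempty ι] {E : ι → Set α}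
    (hE : ∀ i, MeasurableSet (E i)) (hcover : ∀ x, ∃ i, x ∈ E i) {F : ι → α → β}
    (hF : ∀ i, Measurable (F i)) :
    ∃ G : α → β, Measurable G ∧ ∀ x, ∃ i, x ∈ E i ∧ G x = F i x := by
  classical
  obtain ⟨e, he⟩ := exists_surjective_nat ι
  have hcover' : ∀ x, ∃ n, x ∈ E (e n) := fun x =>
    let ⟨i, hi⟩ := hcover x; let ⟨n, hn⟩ := he i; ⟨n, hn ▸ hi⟩
  exact ⟨_, Measurable.find (p := fun n x => x ∈ E (e n)) (fun n => hF (e n))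
    (fun n => hE (e n)) hcover', fun x => ⟨_, Nat.find_spec (hcover' x), rfl⟩⟩

theorem abs_sum_mul_le {ι : Type*} (s : Finset ι) (w x : ι → ℝ) {M : ℝ}
    (hx : ∀ i, |x i| ≤ M) : |∑ i ∈ s, w i * x i| ≤ (∑ i ∈ s, |w i|) * M := by
  rw [Finset.sum_mul]
  refine (Finset.abs_sum_le_sum_abs _ _).trans (Finset.sum_le_sum fun i _ => ?_)
  rw [abs_mul]
  exact mul_le_mul_of_nonneg_left (hx i) (abs_nonneg _)

theorem eventually_nhdsGT_zero_forall_mul_le {ι : Type*} [Finite ι] {x y : ι → ℝ}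
    (hy : ∀ i, 0 ≤ y i) (hxy : ∀ i, 0 < x i → 0 < y i) :
    ∀ᶠ κ in 𝓝[>] (0 : ℝ), ∀ i, κ * x i ≤ y i := by
  refine eventually_all.2 fun i => ?_
  rcases le_or_gt (x i) 0 with hx | hx
  · filter_upwards [self_mem_nhdsWithin] with κ hκ
    exact (mul_nonpos_of_nonneg_of_nonpos (le_of_lt hκ) hx).trans (hy i)
  · have hlim : Tendsto (fun κ : ℝ => κ * x i) (𝓝[>] 0) (𝓝 0) := by
      simpa using ((continuous_mul_const (x i)).tendsto 0).mono_left nhdsWithin_le_nhds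
    exact (hlim.eventually (gt_mem_nhds (hxy i hx))).mono fun _ => le_of_lt

theorem tendsto_exp_div_nhdsGT_zero_of_neg {x : ℝ} (hx : x < 0) :
    Tendsto (fun ε => Real.exp (x / ε)) (𝓝[>] 0) (𝓝 0) :=
  Real.tendsto_exp_atBot.comp <| (tendsto_inv_nhdsGT_zero.const_mul_atTop_of_neg hx).congr
    fun ε => (div_eq_mul_inv x ε).symm

section Simplex

variable {S : Type*} [Fintype S]

theorem continuous_stdSimplex_apply (s : S) :
    Continuous fun ν : stdSimplex ℝ S => (ν : S → ℝ) s :=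
  (continuous_apply s).comp continuous_subtype_val

def stdSimplexMix (r : unitInterval) (ν ν' : stdSimplex ℝ S) : stdSimplex ℝ S :=
  ⟨(1 - (r : ℝ)) • (ν : S → ℝ) + (r : ℝ) • (ν' : S → ℝ),
    convex_stdSimplex ℝ S ν.2 ν'.2 (unitInterval.one_minus_nonneg r) r.2.1 (by ring)⟩

theorem stdSimplexMix_apply (r : unitInterval) (ν ν' : stdSimplex ℝ S) (s : S) :
    (stdSimplexMix r ν ν' : S → ℝ) s = (1 - r) * (ν : S → ℝ) s + r * (ν' : S → ℝ) s :=
  rfl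

theorem continuous_stdSimplexMix (r : unitInterval) :
    Continuous fun p : stdSimplex ℝ S × stdSimplex ℝ S => stdSimplexMix r p.1 p.2 := by
  unfold stdSimplexMix
  fun_prop

end Simplex

section ExpectedUtility

variable {S α : Type*} [Fintype S] (u : S → α → ℝ)

theorem continuous_expUtil (a : α) : Continuous fun ν : stdSimplex ℝ S => expUtil u ν a :=
  continuous_finsetSum _ fun s _ => continuous_const.mul (continuous_stdSimplex_apply s)

theorem expUtil_stdSimplexMix (r : unitInterval) (ν ν' : stdSimplex ℝ S) (a : α) :
    expUtil u (stdSimplexMix r ν ν') a = (1 - r) * expUtil u ν a + r * expUtil u ν' a := by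
  simp only [expUtil, stdSimplexMix_apply, mul_sum, ← sum_add_distrib]
  exact sum_congr rfl fun s _ => by ring

theorem abs_expUtil_le_norm [Fintype α] (ν : stdSimplex ℝ S) (a : α) :
    |expUtil u ν a| ≤ ‖u‖ := by
  have hν : ∑ s, |(ν : S → ℝ) s| = 1 := by
    rw [← ν.2.2]
    exact sum_congr rfl fun s _ => abs_of_nonneg (ν.2.1 s)
  calc |expUtil u ν a| = |∑ s, (ν : S → ℝ) s * u s a| := by
        simp only [expUtil, mul_comm (u _ a)]
    _ ≤ (∑ s, |(ν : S → ℝ) s|) * ‖u‖ :=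
        abs_sum_mul_le univ _ _ fun s => (norm_le_pi_norm (u s) a).trans (norm_le_pi_norm u s)
    _ = ‖u‖ := by rw [hν, one_mul]

theorem isClosed_setOf_mem_admissible (a : α) :
    IsClosed {ν : stdSimplex ℝ S | a ∈ admissible u ν} := by
  show IsClosed {ν : stdSimplex ℝ S | ∀ b, expUtil u ν b ≤ expUtil u ν a}
  rw [Set.ofPred_forall]
  exact isClosed_iInter fun b => isClosed_le (continuous_expUtil u b) (continuous_expUtil u a)

theorem exists_mem_admissible [Finite α] [Nonempty α] (ν : stdSimplex ℝ S) :
    ∃ a, a ∈ admissible u ν :=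
  Finite.exists_max fun a => expUtil u ν a

theorem admissible_eq_singleton_iff {ν : stdSimplex ℝ S} {a : α} :
    admissible u ν = {a} ↔ ∀ c, c ≠ a → expUtil u ν c < expUtil u ν a := by
  constructor
  · intro h c hc
    have ha : a ∈ admissible u ν := h ▸ rfl
    have hc' : c ∉ admissible u ν := by rw [h]; exact hc
    simp only [admissible, Set.mem_ofPred_eq, not_forall, not_le] at hc'
    obtain ⟨d, hd⟩ := hc'
    exact hd.trans_le (ha d)
  · intro h
    ext c
    refine ⟨fun hc => by_contra fun hca => (h c hca).not_ge (hc a), ?_⟩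
    rintro rfl d
    rcases eq_or_ne d c with rfl | hd
    exacts [le_rfl, (h d hd).le]

theorem admissible_stdSimplexMix_eq_singleton {ν ν' : stdSimplex ℝ S} {a : α}
    (ha : a ∈ admissible u ν) (ha' : admissible u ν' = {a}) {r : unitInterval}
    (hr : 0 < (r : ℝ)) : admissible u (stdSimplexMix r ν ν') = {a} := by
  rw [admissible_eq_singleton_iff] at ha' ⊢
  intro c hc
  rw [expUtil_stdSimplexMix, expUtil_stdSimplexMix]
  have := mul_le_mul_of_nonneg_left (ha c) (unitInterval.one_minus_nonneg r)
  have := mul_lt_mul_of_pos_left (ha' c hc) hr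
  linarith

end ExpectedUtility

section Softmax

variable {S α : Type*} [Fintype S] [Fintype α] (u : S → α → ℝ) {lam : α → ℝ}

theorem sum_regStrategy_denom_pos [Nonempty α] (hlam : ∀ a, 0 < lam a) (ε : ℝ)
    (ν : stdSimplex ℝ S) : 0 < ∑ b, lam b * Real.exp (expUtil u ν b / ε) :=
  sum_pos (fun b _ => mul_pos (hlam b) (Real.exp_pos _)) univ_nonempty

theorem regStrategy_nonneg [Nonempty α] (hlam : ∀ a, 0 < lam a) (ε : ℝ)
    (ν : stdSimplex ℝ S) (a : α) : 0 ≤ regStrategy u lam ε ν a :=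
  div_nonneg (mul_nonneg (hlam a).le (Real.exp_pos _).le)
    (sum_regStrategy_denom_pos u hlam ε ν).le

theorem sum_regStrategy [Nonempty α] (hlam : ∀ a, 0 < lam a) (ε : ℝ) (ν : stdSimplex ℝ S) :
    ∑ a, regStrategy u lam ε ν a = 1 := by
  simp only [regStrategy]
  rw [← sum_div, div_self (sum_regStrategy_denom_pos u hlam ε ν).ne']

theorem continuous_regStrategy [Nonempty α] (hlam : ∀ a, 0 < lam a) (ε : ℝ) (a : α) :
    Continuous fun ν : stdSimplex ℝ S => regStrategy u lam ε ν a := by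
  have hU := continuous_expUtil u (S := S)
  refine Continuous.div (by fun_prop) (by fun_prop) fun ν => ?_
  exact (sum_regStrategy_denom_pos u hlam ε ν).ne'

theorem regStrategy_eq_shift (ε : ℝ) (ν : stdSimplex ℝ S) (a : α) (x : ℝ) :
    regStrategy u lam ε ν a = lam a * Real.exp ((expUtil u ν a - x) / ε) /
      ∑ b, lam b * Real.exp ((expUtil u ν b - x) / ε) := by
  have hsplit : ∀ b, lam b * Real.exp (expUtil u ν b / ε) =
      lam b * Real.exp ((expUtil u ν b - x) / ε) * Real.exp (x / ε) := fun b => by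
    rw [mul_assoc, ← Real.exp_add, sub_div, sub_add_cancel]
  simp only [regStrategy, hsplit, ← sum_mul]
  exact mul_div_mul_right _ _ (Real.exp_ne_zero _)

theorem tendsto_regStrategy [DecidableEq α] (hlam : ∀ a, 0 < lam a) {ν : stdSimplex ℝ S}
    {a : α} (ha : admissible u ν = {a}) (c : α) :
    Tendsto (fun ε => regStrategy u lam ε ν c) (𝓝[>] 0) (𝓝 (if c = a then 1 else 0)) := by
  have hweight : ∀ b, Tendsto
      (fun ε => lam b * Real.exp ((expUtil u ν b - expUtil u ν a) / ε)) (𝓝[>] 0)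
      (𝓝 (if b = a then lam a else 0)) := by
    intro b
    rcases eq_or_ne b a with rfl | hb
    · simp
    · simpa [hb] using (tendsto_exp_div_nhdsGT_zero_of_neg
        (sub_neg.2 ((admissible_eq_singleton_iff u).1 ha b hb))).const_mul (lam b)
  have hsum := tendsto_finsetSum univ fun b _ => hweight b
  rw [sum_ite_eq' univ a, if_pos (mem_univ a)] at hsum
  have hlim := (hweight c).div hsum (hlam a).ne'
  convert hlim.congr fun ε => (regStrategy_eq_shift u ε ν c (expUtil u ν a)).symm using 2
  split_ifs
  exacts [(div_self (hlam a).ne').symm, (zero_div _).symm]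

end Softmax

section BestResponse

variable {S L : Type*} [Fintype S] {A T : L → Type*}
  (u : ∀ l, T l → S → A l → ℝ) (v : S → (∀ l, A l) → ℝ)

def IsSenderOptimalResponse (b : (∀ l, T l) → ∀ l, A l) (ν : stdSimplex ℝ S) : Prop :=
  ∀ t : ∀ l, T l, (∀ l, b t l ∈ admissible (u l (t l)) ν) ∧
    ∀ a : ∀ l, A l, (∀ l, a l ∈ admissible (u l (t l)) ν) → expUtil v ν a ≤ expUtil v ν (b t)

def IsUniqueBestResponse (b : (∀ l, T l) → ∀ l, A l) (ν : stdSimplex ℝ S) : Prop :=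
  ∀ (t : ∀ l, T l) (l : L), admissible (u l (t l)) ν = {b t l}

variable {u v}

theorem IsUniqueBestResponse.isSenderOptimalResponse {b : (∀ l, T l) → ∀ l, A l}
    {ν : stdSimplex ℝ S} (hb : IsUniqueBestResponse u b ν) : IsSenderOptimalResponse u v b ν :=
  fun t => ⟨fun l => (hb t l).symm ▸ rfl, fun a ha =>
    (funext fun l => (hb t l ▸ ha l : a l ∈ ({b t l} : Set (A l))) : a = b t) ▸ le_rfl⟩

theorem IsUniqueBestResponse.stdSimplexMix {b : (∀ l, T l) → ∀ l, A l} {ν ν' : stdSimplex ℝ S}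
    (hb : ∀ t l, b t l ∈ admissible (u l (t l)) ν) (hb' : IsUniqueBestResponse u b ν')
    {r : unitInterval} (hr : 0 < (r : ℝ)) : IsUniqueBestResponse u b (stdSimplexMix r ν ν') :=
  fun t l => admissible_stdSimplexMix_eq_singleton _ (hb t l) (hb' t l) hr

variable [Fintype L]

theorem exists_isUniqueBestResponse_of_regAssumption {μ : stdSimplex ℝ S}
    (hasm : regAssumption u μ) (b : (∀ l, T l) → ∀ l, A l) : ∃ ν' : stdSimplex ℝ S,
      (∀ s, 0 < (ν' : S → ℝ) s → 0 < (μ : S → ℝ) s) ∧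
      ((∃ ν, ∀ t l, b t l ∈ admissible (u l (t l)) ν) → IsUniqueBestResponse u b ν') := by
  by_cases hfeas : ∃ ν, ∀ t l, b t l ∈ admissible (u l (t l)) ν
  · obtain ⟨ν', hsupp, huniq⟩ := hasm b hfeas
    refine ⟨ν', hsupp, fun _ t => Set.univ_pi_eq_singleton_iff.1 ?_⟩
    rw [← huniq t]
    ext
    simp
  · exact ⟨μ, fun _ => id, fun h => absurd h hfeas⟩

variable (u v) [∀ l, Fintype (A l)]

theorem measurableSet_isSenderOptimalResponse [∀ l, Fintype (T l)]
    (b : (∀ l, T l) → ∀ l, A l) :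
    MeasurableSet {ν : stdSimplex ℝ S | IsSenderOptimalResponse u v b ν} := by
  have hadm : ∀ (t : ∀ l, T l) (a : ∀ l, A l),
      MeasurableSet {ν : stdSimplex ℝ S | ∀ l, a l ∈ admissible (u l (t l)) ν} := fun t a => by
    rw [Set.ofPred_forall]
    exact MeasurableSet.iInter fun l => (isClosed_setOf_mem_admissible _ _).measurableSet
  unfold IsSenderOptimalResponse
  rw [Set.ofPred_forall]
  refine MeasurableSet.iInter fun t => (hadm t (b t)).inter ?_
  show MeasurableSet {ν | ∀ a : ∀ l, A l,
    (∀ l, a l ∈ admissible (u l (t l)) ν) → expUtil v ν a ≤ expUtil v ν (b t)}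
  rw [Set.ofPred_forall]
  exact MeasurableSet.iInter fun a => (hadm t a).imp (measurableSet_le
    (continuous_expUtil v a).measurable (continuous_expUtil v (b t)).measurable)

theorem exists_isSenderOptimalResponse [DecidableEq L] [∀ l, Nonempty (A l)]
    (ν : stdSimplex ℝ S) : ∃ b, IsSenderOptimalResponse u v b ν := by
  classical
  have hbest : ∀ t : ∀ l, T l, ∃ a ∈ univ.filter fun a : ∀ l, A l =>
      ∀ l, a l ∈ admissible (u l (t l)) ν, ∀ a' ∈ univ.filter fun a : ∀ l, A l =>
      ∀ l, a l ∈ admissible (u l (t l)) ν, expUtil v ν a' ≤ expUtil v ν a := fun t =>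
    exists_max_image _ _ ⟨fun l => (exists_mem_admissible (u l (t l)) ν).choose,
      mem_filter.2 ⟨mem_univ _, fun l => (exists_mem_admissible (u l (t l)) ν).choose_spec⟩⟩
  choose b hb hbmax using hbest
  exact ⟨b, fun t => ⟨(mem_filter.1 (hb t)).2, fun a ha => hbmax t a (by simpa using ha)⟩⟩

end BestResponse

section SenderGain

variable {S L : Type*} [Fintype S] [Fintype L] [DecidableEq L] {A T : L → Type*}
  [∀ l, Fintype (T l)] (v : S → (∀ l, A l) → ℝ) (η : ∀ l, T l → ℝ)

def pureSenderGain (b : (∀ l, T l) → ∀ l, A l) (ν : stdSimplex ℝ S) : ℝ :=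
  ∑ t : ∀ l, T l, (∏ l, η l (t l)) * expUtil v ν (b t)

theorem pureSenderGain_stdSimplexMix (b : (∀ l, T l) → ∀ l, A l) (r : unitInterval)
    (ν ν' : stdSimplex ℝ S) : pureSenderGain v η b (stdSimplexMix r ν ν') =
      (1 - r) * pureSenderGain v η b ν + r * pureSenderGain v η b ν' := by
  simp only [pureSenderGain, expUtil_stdSimplexMix, mul_sum, ← sum_add_distrib]
  exact sum_congr rfl fun t _ => by ring

theorem continuous_pureSenderGain (b : (∀ l, T l) → ∀ l, A l) :
    Continuous (pureSenderGain v η b (S := S)) :=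
  continuous_finsetSum _ fun t _ => continuous_const.mul (continuous_expUtil v (b t))

variable [∀ l, Fintype (A l)]

def senderGainBound : ℝ :=
  ∑ t : ∀ l, T l, |∏ l, η l (t l)| * ‖v‖

theorem abs_pureSenderGain_le (b : (∀ l, T l) → ∀ l, A l) (ν : stdSimplex ℝ S) :
    |pureSenderGain v η b ν| ≤ senderGainBound v η := by
  rw [senderGainBound, ← sum_mul]
  exact abs_sum_mul_le _ _ _ fun t => abs_expUtil_le_norm v ν (b t)

variable {u : ∀ l, T l → S → A l → ℝ} {v η}

theorem senderGain_eq_pureSenderGain {b : (∀ l, T l) → ∀ l, A l} {ν : stdSimplex ℝ S}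
    (hb : IsSenderOptimalResponse u v b ν) : senderGain u v η ν = pureSenderGain v η b ν := by
  refine sum_congr rfl fun t _ => congrArg _ (IsGreatest.csSup_eq ⟨⟨b t, (hb t).1, rfl⟩, ?_⟩)
  rintro _ ⟨a, ha, rfl⟩
  exact (hb t).2 a ha

theorem senderGain_stdSimplexMix {b : (∀ l, T l) → ∀ l, A l} {ν ν' : stdSimplex ℝ S}
    (hb : IsSenderOptimalResponse u v b ν) (hb' : IsUniqueBestResponse u b ν')
    {r : unitInterval} (hr : 0 < (r : ℝ)) : senderGain u v η (stdSimplexMix r ν ν') =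
      (1 - r) * senderGain u v η ν + r * pureSenderGain v η b ν' := by
  rw [senderGain_eq_pureSenderGain hb, senderGain_eq_pureSenderGain
    ((hb'.stdSimplexMix (fun t => (hb t).1) hr).isSenderOptimalResponse (v := v)),
    pureSenderGain_stdSimplexMix]

variable [∀ l, Nonempty (A l)]

theorem abs_senderGain_le (ν : stdSimplex ℝ S) :
    |senderGain u v η ν| ≤ senderGainBound v η := by
  obtain ⟨b, hb⟩ := exists_isSenderOptimalResponse u v ν
  rw [senderGain_eq_pureSenderGain hb]
  exact abs_pureSenderGain_le v η b ν

theorem abs_senderGain_stdSimplexMix_sub_le {b : (∀ l, T l) → ∀ l, A l}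
    {ν ν' : stdSimplex ℝ S} (hb : IsSenderOptimalResponse u v b ν)
    (hb' : IsUniqueBestResponse u b ν') {r : unitInterval} (hr : 0 < (r : ℝ)) :
    |senderGain u v η (stdSimplexMix r ν ν') - senderGain u v η ν| ≤
      2 * r * senderGainBound v η := by
  have hsub : (1 - r) * senderGain u v η ν + r * pureSenderGain v η b ν' - senderGain u v η ν =
      r * (pureSenderGain v η b ν' - senderGain u v η ν) := by ring
  calc _ = r * |pureSenderGain v η b ν' - senderGain u v η ν| := by
        rw [senderGain_stdSimplexMix hb hb' hr, hsub, abs_mul, abs_of_pos hr]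
    _ ≤ r * (senderGainBound v η + senderGainBound v η) := by
        gcongr
        exact (abs_sub _ _).trans
          (add_le_add (abs_pureSenderGain_le v η b ν') (abs_senderGain_le ν))
    _ = 2 * r * senderGainBound v η := by ring

theorem measurable_senderGain : Measurable (senderGain u v η (S := S)) := by
  obtain ⟨G, hG, hGW⟩ := exists_measurable_selection
    (measurableSet_isSenderOptimalResponse u v) (exists_isSenderOptimalResponse u v)
    fun b => (continuous_pureSenderGain v η b).measurable
  convert hG using 1
  ext ν
  obtain ⟨b, hb, hGb⟩ := hGW ν
  rw [hGb, senderGain_eq_pureSenderGain hb]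

end SenderGain

section RegularizedGain

variable {S L : Type*} [Fintype S] [Fintype L] [DecidableEq L] {A T : L → Type*}
  [∀ l, Fintype (A l)] [∀ l, Fintype (T l)]
  {u : ∀ l, T l → S → A l → ℝ} {v : S → (∀ l, A l) → ℝ} {η : ∀ l, T l → ℝ}
  {lam : ∀ l, A l → ℝ}

theorem regSenderGain_eq (ε : ℝ) (ν : stdSimplex ℝ S) : regSenderGain u v η lam ε ν =
    ∑ t : ∀ l, T l, (∏ l, η l (t l)) *
      ∑ a : ∀ l, A l, (∏ l, regStrategy (u l (t l)) (lam l) ε ν (a l)) * expUtil v ν a := by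
  refine sum_congr rfl fun t _ => congrArg _ ?_
  rw [sum_comm]
  simp only [expUtil, mul_sum]
  exact sum_congr rfl fun a _ => sum_congr rfl fun s _ => by ring

theorem tendsto_regSenderGain (hlam : ∀ l a, 0 < lam l a) {b : (∀ l, T l) → ∀ l, A l}
    {ν : stdSimplex ℝ S} (hb : IsUniqueBestResponse u b ν) :
    Tendsto (fun ε => regSenderGain u v η lam ε ν) (𝓝[>] 0) (𝓝 (senderGain u v η ν)) := by
  classical
  rw [senderGain_eq_pureSenderGain hb.isSenderOptimalResponse]
  simp only [regSenderGain_eq, pureSenderGain]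
  have hprod : ∀ t a, Tendsto (fun ε => ∏ l, regStrategy (u l (t l)) (lam l) ε ν (a l))
      (𝓝[>] 0) (𝓝 (if a = b t then 1 else 0)) := fun t a => by
    simpa only [Fintype.prod_boole, ← funext_iff] using tendsto_finsetProd univ fun l _ =>
      tendsto_regStrategy (u l (t l)) (hlam l) (hb t l) (a l)
  have hsum : ∀ t, Tendsto (fun ε => ∑ a : ∀ l, A l,
      (∏ l, regStrategy (u l (t l)) (lam l) ε ν (a l)) * expUtil v ν a)
      (𝓝[>] 0) (𝓝 (expUtil v ν (b t))) := fun t => by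
    simpa using tendsto_finsetSum univ fun a _ => (hprod t a).mul_const (expUtil v ν a)
  exact tendsto_finsetSum _ fun t _ => (hsum t).const_mul _

variable [∀ l, Nonempty (A l)]

theorem abs_regSenderGain_le (hlam : ∀ l a, 0 < lam l a) (ε : ℝ) (ν : stdSimplex ℝ S) :
    |regSenderGain u v η lam ε ν| ≤ senderGainBound v η := by
  rw [regSenderGain_eq, senderGainBound, ← sum_mul]
  refine abs_sum_mul_le _ _ _ fun t => ?_
  have hprob : ∑ a : ∀ l, A l, |∏ l, regStrategy (u l (t l)) (lam l) ε ν (a l)| = 1 := by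
    simp only [abs_prod, abs_of_nonneg (regStrategy_nonneg _ (hlam _) _ _ _), ← Fintype.prod_sum,
      sum_regStrategy _ (hlam _), prod_const_one]
  calc _ ≤ (∑ a : ∀ l, A l, |∏ l, regStrategy (u l (t l)) (lam l) ε ν (a l)|) * ‖v‖ :=
        abs_sum_mul_le _ _ _ fun a => abs_expUtil_le_norm v ν a
    _ = ‖v‖ := by rw [hprob, one_mul]

theorem continuous_regSenderGain (hlam : ∀ l a, 0 < lam l a) (ε : ℝ) :
    Continuous (regSenderGain u v η lam ε) := by
  refine continuous_finsetSum _ fun t _ => continuous_const.mul <|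
    continuous_finsetSum _ fun s _ => continuous_finsetSum _ fun a _ => ?_
  exact (continuous_const.mul (continuous_stdSimplex_apply s)).mul <|
    continuous_finsetProd _ fun l _ => continuous_regStrategy _ (hlam l) ε (a l)

end RegularizedGain

section Measures

theorem Continuous.integrable_of_compactSpace {Y E : Type*} [TopologicalSpace Y]
    [CompactSpace Y] [MeasurableSpace Y] [OpensMeasurableSpace Y] [NormedAddCommGroup E]
    {f : Y → E} (hf : Continuous f) (τ : Measure Y) [IsFiniteMeasure τ] : Integrable f τ :=
  hf.integrable_of_hasCompactSupport (HasCompactSupport.of_compactSpace f)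

variable {X : Type*} [MeasurableSpace X]

theorem abs_integral_le_of_forall_abs_le (τ : Measure X) [IsProbabilityMeasure τ] {f : X → ℝ}
    {C : ℝ} (h : ∀ x, |f x| ≤ C) : |∫ x, f x ∂τ| ≤ C := by
  simpa using norm_integral_le_of_norm_le_const (μ := τ)
    (.of_forall fun x => (Real.norm_eq_abs _).trans_le (h x))

variable {S : Type*} [Fintype S]

theorem one_sub_mul_integral_apply_le {τ : ProbabilityMeasure (stdSimplex ℝ S)}
    {μ : stdSimplex ℝ S} (hτ : τ ∈ barycentric μ) {P : stdSimplex ℝ S → stdSimplex ℝ S}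
    (hP : Measurable P) {β : ℝ} (hβ1 : β ≤ 1)
    (hPle : ∀ ν s, (P ν : S → ℝ) s ≤ (ν : S → ℝ) s + β * (μ : S → ℝ) s) (s : S) :
    (1 - β) * ∫ ν, (P ν : S → ℝ) s ∂(τ : Measure (stdSimplex ℝ S)) ≤ (μ : S → ℝ) s := by
  have hcoord := (continuous_stdSimplex_apply (S := S) s).integrable_of_compactSpace
  have hmono : ∫ ν, (P ν : S → ℝ) s ∂(τ : Measure (stdSimplex ℝ S)) ≤
      ∫ ν, ((ν : S → ℝ) s + β * (μ : S → ℝ) s) ∂(τ : Measure (stdSimplex ℝ S)) :=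
    integral_mono ((hcoord ((τ : Measure (stdSimplex ℝ S)).map P)).comp_measurable hP)
      ((hcoord _).add (integrable_const _)) fun ν => hPle ν s
  rw [integral_add (hcoord _) (integrable_const _), hτ s] at hmono
  simp only [integral_const, probReal_univ, one_smul] at hmono
  nlinarith [mul_le_mul_of_nonneg_left hmono (sub_nonneg.2 hβ1),
    mul_nonneg (sq_nonneg β) (stdSimplex.zero_le μ s)]

/-- `τ'` is `β δ_ρ + (1 - β) P_* τ` with `ρ = (μ - (1 - β) m) / β`, where `m` is the barycenter
of `P_* τ`. -/
theorem exists_mem_barycentric_integral_eq (τ : Measure X) [IsProbabilityMeasure τ]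
    {P : X → stdSimplex ℝ S} (hP : Measurable P) (μ : stdSimplex ℝ S) {β : ℝ}
    (hβ0 : 0 < β) (hβ1 : β ≤ 1)
    (hle : ∀ s, (1 - β) * ∫ x, (P x : S → ℝ) s ∂τ ≤ (μ : S → ℝ) s) :
    ∃ τ' ∈ barycentric μ, ∃ ρ : stdSimplex ℝ S, ∀ f : stdSimplex ℝ S → ℝ, Continuous f →
      ∫ ν, f ν ∂(τ' : Measure (stdSimplex ℝ S)) =
        β * f ρ + (1 - β) * ∫ x, f (P x) ∂τ := by
  have hint : ∀ f : stdSimplex ℝ S → ℝ, Continuous f → Integrable (fun x => f (P x)) τ :=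
    fun f hf => (hf.integrable_of_compactSpace (τ.map P)).comp_measurable hP
  set m : S → ℝ := fun s => ∫ x, (P x : S → ℝ) s ∂τ
  have hm : ∑ s, m s = 1 := by
    rw [← integral_finsetSum _ fun s _ => hint _ (continuous_stdSimplex_apply s)]
    simp
  let ρ : stdSimplex ℝ S := ⟨fun s => ((μ : S → ℝ) s - (1 - β) * m s) / β,
    fun s => div_nonneg (sub_nonneg.2 (hle s)) hβ0.le, by
      rw [← sum_div, sum_sub_distrib, ← mul_sum, hm, stdSimplex.sum_eq_one μ]
      field_simp
      ring⟩
  let τ' : Measure (stdSimplex ℝ S) :=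
    β.toNNReal • Measure.dirac ρ + (1 - β).toNNReal • τ.map P
  have hτ' : IsProbabilityMeasure τ' := ⟨by
    simp only [τ', Measure.add_apply, Measure.smul_apply, Measure.map_apply hP .univ,
      Set.preimage_univ, measure_univ, Measure.dirac_apply_of_mem (Set.mem_univ ρ)]
    rw [← add_smul, ← Real.toNNReal_add hβ0.le (sub_nonneg.2 hβ1), add_sub_cancel,
      Real.toNNReal_one, one_smul]⟩
  have hτ'int : ∀ f : stdSimplex ℝ S → ℝ, Continuous f →
      ∫ ν, f ν ∂τ' = β * f ρ + (1 - β) * ∫ x, f (P x) ∂τ := fun f hf => by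
    rw [integral_add_measure (hf.integrable_of_compactSpace _)
        (hf.integrable_of_compactSpace _), integral_smul_nnreal_measure,
      integral_smul_nnreal_measure, integral_dirac,
      integral_map hP.aemeasurable hf.aestronglyMeasurable, NNReal.smul_def, NNReal.smul_def,
      Real.coe_toNNReal _ hβ0.le, Real.coe_toNNReal _ (sub_nonneg.2 hβ1), smul_eq_mul,
      smul_eq_mul]
  refine ⟨⟨τ', hτ'⟩, fun s => ?_, ρ, hτ'int⟩
  change ∫ ν, (ν : S → ℝ) s ∂τ' = _
  rw [hτ'int _ (continuous_stdSimplex_apply s)]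
  change β * (((μ : S → ℝ) s - (1 - β) * m s) / β) + (1 - β) * m s = _
  field_simp
  ring

end Measures

section Recovery

variable {S L : Type*} [Fintype S] [Fintype L] [DecidableEq L] {A T : L → Type*}
  [∀ l, Fintype (A l)] [∀ l, Fintype (T l)] [∀ l, Nonempty (A l)]
  {u : ∀ l, T l → S → A l → ℝ} {v : S → (∀ l, A l) → ℝ} {η : ∀ l, T l → ℝ}
  {lam : ∀ l, A l → ℝ} {μ : stdSimplex ℝ S} {X : Type*} [MeasurableSpace X]

theorem integrable_senderGain_comp (τ : Measure X) [IsFiniteMeasure τ]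
    {P : X → stdSimplex ℝ S} (hP : Measurable P) :
    Integrable (fun x => senderGain u v η (P x)) τ :=
  .of_bound (measurable_senderGain.comp hP).aestronglyMeasurable (senderGainBound v η)
    (.of_forall fun x => abs_senderGain_le (P x))

theorem tendsto_integral_regSenderGain (τ : Measure X) [IsFiniteMeasure τ]
    (hlam : ∀ l a, 0 < lam l a) {P : X → stdSimplex ℝ S} (hP : Measurable P)
    (huniq : ∀ x, ∃ b, IsUniqueBestResponse u b (P x)) :
    Tendsto (fun ε => ∫ x, regSenderGain u v η lam ε (P x) ∂τ) (𝓝[>] 0)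
      (𝓝 (∫ x, senderGain u v η (P x) ∂τ)) := by
  refine tendsto_integral_filter_of_dominated_convergence (fun _ => senderGainBound v η)
    (.of_forall fun ε =>
      ((continuous_regSenderGain hlam ε).measurable.comp hP).aestronglyMeasurable)
    (.of_forall fun ε => .of_forall fun x => abs_regSenderGain_le hlam ε (P x))
    (integrable_const _) (.of_forall fun x => ?_)
  obtain ⟨b, hb⟩ := huniq x
  exact tendsto_regSenderGain hlam hb

/-- `P ν` is `ν` moved a fraction at most `β` of the way towards a prior, supported in `supp μ`,
at which a sender-optimal response at `ν` is the unique best response. -/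
theorem exists_measurable_perturbation (hasm : regAssumption u μ) {β : ℝ} (hβ0 : 0 < β)
    (hβ1 : β ≤ 1) :
    ∃ P : stdSimplex ℝ S → stdSimplex ℝ S, Measurable P ∧
      (∀ ν, ∃ b, IsUniqueBestResponse u b (P ν)) ∧
      (∀ ν, |senderGain u v η (P ν) - senderGain u v η ν| ≤
        2 * β * senderGainBound v η) ∧
      ∀ ν s, (P ν : S → ℝ) s ≤ (ν : S → ℝ) s + β * (μ : S → ℝ) s := by
  choose ν' hν'supp hν'uniq using exists_isUniqueBestResponse_of_regAssumption hasm
  have h01 : ∀ᶠ κ in 𝓝[>] (0 : ℝ), κ ∈ Set.Ioo 0 1 := Ioo_mem_nhdsGT one_pos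
  obtain ⟨κ, ⟨hκ0, hκ1⟩, hκ⟩ := (h01.and
    (eventually_nhdsGT_zero_forall_mul_le (fun p : _ × S => stdSimplex.zero_le μ p.2)
      fun p => hν'supp p.1 p.2)).exists
  obtain ⟨Q, hQ, hQsel⟩ := exists_measurable_selection
    (measurableSet_isSenderOptimalResponse u v) (exists_isSenderOptimalResponse u v)
    (F := fun b _ => ν' b) fun b => measurable_const
  have hsel : ∀ ν, ∃ b, IsSenderOptimalResponse u v b ν ∧ IsUniqueBestResponse u b (Q ν) :=
    fun ν => by
      obtain ⟨b, hb, hQb⟩ := hQsel ν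
      exact ⟨b, hb, hQb ▸ hν'uniq b ⟨ν, fun t => (hb t).1⟩⟩
  have hQμ : ∀ ν s, κ * (Q ν : S → ℝ) s ≤ (μ : S → ℝ) s := fun ν s => by
    obtain ⟨b, -, hQb⟩ := hQsel ν
    exact hQb ▸ hκ (b, s)
  have hr0 : 0 < κ * β := mul_pos hκ0 hβ0
  let r : unitInterval := ⟨κ * β, hr0.le, by nlinarith⟩
  have hr : (r : ℝ) = κ * β := rfl
  refine ⟨fun ν => stdSimplexMix r ν (Q ν),
    (continuous_stdSimplexMix r).measurable.comp (measurable_id.prodMk hQ), fun ν => ?_,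
    fun ν => ?_, fun ν s => ?_⟩
  · obtain ⟨b, hb, hb'⟩ := hsel ν
    exact ⟨b, hb'.stdSimplexMix (fun t => (hb t).1) hr0⟩
  · obtain ⟨b, hb, hb'⟩ := hsel ν
    refine (abs_senderGain_stdSimplexMix_sub_le hb hb' hr0).trans ?_
    have hC := (abs_nonneg _).trans (abs_senderGain_le (u := u) (v := v) (η := η) ν)
    rw [hr]
    nlinarith [mul_nonneg (mul_nonneg hβ0.le hC) (sub_nonneg.2 hκ1.le)]
  · rw [stdSimplexMix_apply, hr]
    nlinarith [mul_le_mul_of_nonneg_left (hQμ ν s) hβ0.le,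
      mul_nonneg hr0.le (stdSimplex.zero_le ν s)]

theorem exists_mem_barycentric_eventually_abs_sub_lt (hlam : ∀ l a, 0 < lam l a)
    (hasm : regAssumption u μ) {τ : ProbabilityMeasure (stdSimplex ℝ S)}
    (hτ : τ ∈ barycentric μ) {β : ℝ} (hβ0 : 0 < β) (hβ1 : β ≤ 1) {δ : ℝ} (hδ : 0 < δ) :
    ∃ τ' ∈ barycentric μ, ∀ᶠ ε in 𝓝[>] 0,
      |∫ ν, regSenderGain u v η lam ε ν ∂(τ' : Measure (stdSimplex ℝ S)) -
        ∫ ν, senderGain u v η ν ∂(τ : Measure (stdSimplex ℝ S))| <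
          4 * β * senderGainBound v η + δ := by
  obtain ⟨P, hP, huniq, hgain, hmass⟩ :=
    exists_measurable_perturbation (v := v) (η := η) hasm hβ0 hβ1
  obtain ⟨τ', hτ', ρ, hτ'int⟩ := exists_mem_barycentric_integral_eq _ hP μ hβ0 hβ1
    (one_sub_mul_integral_apply_le hτ hP hβ1 hmass)
  refine ⟨τ', hτ', ?_⟩
  set C := senderGainBound v η
  set τ₀ : Measure (stdSimplex ℝ S) := (τ : Measure (stdSimplex ℝ S))
  have hclose : |∫ ν, senderGain u v η (P ν) ∂τ₀ - ∫ ν, senderGain u v η ν ∂τ₀| ≤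
      2 * β * C := by
    rw [← integral_sub (integrable_senderGain_comp τ₀ hP)
      (integrable_senderGain_comp (P := fun ν => ν) τ₀ measurable_id)]
    exact abs_integral_le_of_forall_abs_le τ₀ hgain
  have hWP : |∫ ν, senderGain u v η (P ν) ∂τ₀| ≤ C :=
    abs_integral_le_of_forall_abs_le τ₀ fun ν => abs_senderGain_le (P ν)
  set W := ∫ ν, senderGain u v η ν ∂τ₀
  set WP := ∫ ν, senderGain u v η (P ν) ∂τ₀
  filter_upwards [Metric.tendsto_nhds.1 (tendsto_integral_regSenderGain τ₀ hlam hP huniq) δ hδ]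
    with ε hε
  rw [hτ'int _ (continuous_regSenderGain hlam ε)]
  rw [Real.dist_eq] at hε
  have hρ := abs_regSenderGain_le (u := u) (v := v) (η := η) hlam ε ρ
  set Wε := ∫ ν, regSenderGain u v η lam ε (P ν) ∂τ₀
  calc |β * regSenderGain u v η lam ε ρ + (1 - β) * Wε - W|
      = |β * (regSenderGain u v η lam ε ρ - WP) + (1 - β) * (Wε - WP) + (WP - W)| := by
        ring_nf
    _ ≤ β * (2 * C) + (1 - β) * δ + 2 * β * C := by
        refine (abs_add_three _ _ _).trans (add_le_add_three ?_ ?_ hclose)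
        · rw [abs_mul, abs_of_pos hβ0]
          exact mul_le_mul_of_nonneg_left ((abs_sub _ _).trans (by linarith)) hβ0.le
        · rw [abs_mul, abs_of_nonneg (sub_nonneg.2 hβ1)]
          exact mul_le_mul_of_nonneg_left hε.le (sub_nonneg.2 hβ1)
    _ < 4 * β * C + δ := by nlinarith

theorem exists_mem_barycentric_eventually_dist_lt (hlam : ∀ l a, 0 < lam l a)
    (hasm : regAssumption u μ) {τ : ProbabilityMeasure (stdSimplex ℝ S)}
    (hτ : τ ∈ barycentric μ) {δ : ℝ} (hδ : 0 < δ) :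
    ∃ τ' ∈ barycentric μ, ∀ᶠ ε in 𝓝[>] 0,
      dist (∫ ν, regSenderGain u v η lam ε ν ∂(τ' : Measure (stdSimplex ℝ S)))
        (∫ ν, senderGain u v η ν ∂(τ : Measure (stdSimplex ℝ S))) < δ := by
  set C := senderGainBound v η
  have hC : 0 ≤ C := (abs_nonneg _).trans (abs_senderGain_le (u := u) (v := v) (η := η) μ)
  obtain ⟨β, hβ0, hβ1, hβC⟩ : ∃ β : ℝ, 0 < β ∧ β ≤ 1 ∧ 8 * β * C < δ := by
    refine ⟨min 1 (δ / (8 * (C + 1))), lt_min one_pos (by positivity), min_le_left _ _, ?_⟩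
    have h := (le_div_iff₀ (by positivity)).1 (min_le_right 1 (δ / (8 * (C + 1))))
    nlinarith [lt_min one_pos (by positivity : 0 < δ / (8 * (C + 1)))]
  obtain ⟨τ', hτ', hev⟩ :=
    exists_mem_barycentric_eventually_abs_sub_lt (v := v) (η := η) hlam hasm hτ hβ0 hβ1
      (half_pos hδ)
  exact ⟨τ', hτ', hev.mono fun ε hε => by rw [Real.dist_eq]; linarith⟩

end Recovery

theorem exists_recovery_family_general {S : Type*} [Fintype S]
    {L : Type*} [Fintype L] [DecidableEq L]
    {A : L → Type*} [∀ l, Fintype (A l)] [∀ l, Nonempty (A l)]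
    {T : L → Type*} [∀ l, Fintype (T l)]
    (u : ∀ l, T l → S → A l → ℝ) (v : S → (∀ l, A l) → ℝ)
    (η : ∀ l, T l → ℝ)
    (lam : ∀ l, A l → ℝ)
    (hlampos : ∀ l a, 0 < lam l a)
    (μ : stdSimplex ℝ S) (hasm : regAssumption u μ) :
    ∃ τfam : ℝ → ProbabilityMeasure (stdSimplex ℝ S),
      (∀ ε, 0 < ε → τfam ε ∈ barycentric μ) ∧
      Filter.Tendsto
        (fun ε => ∫ ν, regSenderGain u v η lam ε ν
          ∂(τfam ε : Measure (stdSimplex ℝ S)))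
        (nhdsWithin 0 (Set.Ioi (0 : ℝ)))
        (nhds (sSup {x : ℝ | ∃ τ ∈ barycentric μ,
          x = ∫ ν, senderGain u v η ν ∂(τ : Measure (stdSimplex ℝ S))})) := by
  set V := {x : ℝ | ∃ τ ∈ barycentric μ,
    x = ∫ ν, senderGain u v η ν ∂(τ : Measure (stdSimplex ℝ S))}
  have hne : V.Nonempty :=
    ⟨_, ⟨Measure.dirac μ, inferInstance⟩, fun s => integral_dirac _ μ, rfl⟩
  have hbdd : BddAbove V := ⟨senderGainBound v η, by
    rintro _ ⟨τ, -, rfl⟩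
    exact (abs_le.1 (abs_integral_le_of_forall_abs_le _ abs_senderGain_le)).2⟩
  have hclose : ∀ δ > 0, ∃ τ ∈ barycentric μ, ∀ᶠ ε in 𝓝[>] 0,
      dist (∫ ν, regSenderGain u v η lam ε ν ∂(τ : Measure (stdSimplex ℝ S))) (sSup V) < δ := by
    intro δ hδ
    obtain ⟨_, ⟨τ, hτ, rfl⟩, hlt⟩ := exists_lt_of_lt_csSup hne (sub_lt_self _ (half_pos hδ))
    obtain ⟨τ', hτ', hev⟩ :=
      exists_mem_barycentric_eventually_dist_lt (v := v) (η := η) hlampos hasm hτ (half_pos hδ)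
    refine ⟨τ', hτ', hev.mono fun ε hε => ?_⟩
    have hle := le_csSup hbdd ⟨τ, hτ, rfl⟩
    rw [Real.dist_eq, abs_lt] at hε ⊢
    constructor <;> linarith
  obtain ⟨g, hg, hlim⟩ := Filter.exists_tendsto_of_forall_eventually_dist_lt ker_nhdsGT_zero hclose
  exact ⟨g, fun ε _ => hg ε, hlim⟩

/-- Under the assumption, there is a family `(τ^ε)_{ε>0} ⊆ T_μ` with
`∫ W^ε dτ^ε → W̄* = sup_{τ ∈ T_μ} ∫ W dτ` as `ε → 0⁺`. -/
theorem exists_recovery_family {S : Type*} [Fintype S] [Nonempty S]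
    {L : Type*} [Fintype L] [DecidableEq L]
    {A : L → Type*} [∀ l, Fintype (A l)] [∀ l, Nonempty (A l)]
    {T : L → Type*} [∀ l, Fintype (T l)] [∀ l, Nonempty (T l)]
    (u : ∀ l, T l → S → A l → ℝ) (v : S → (∀ l, A l) → ℝ)
    (η : ∀ l, T l → ℝ) (hη : ∀ l, η l ∈ stdSimplex ℝ (T l))
    (lam : ∀ l, A l → ℝ) (hlam : ∀ l, lam l ∈ stdSimplex ℝ (A l))
    (hlampos : ∀ l a, 0 < lam l a)
    (μ : stdSimplex ℝ S) (hasm : regAssumption u μ) :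
    ∃ τfam : ℝ → ProbabilityMeasure (stdSimplex ℝ S),
      (∀ ε, 0 < ε → τfam ε ∈ barycentric μ) ∧
      Filter.Tendsto
        (fun ε => ∫ ν, regSenderGain u v η lam ε ν
          ∂(τfam ε : Measure (stdSimplex ℝ S)))
        (nhdsWithin 0 (Set.Ioi (0 : ℝ)))
        (nhds (sSup {x : ℝ | ∃ τ ∈ barycentric μ,
          x = ∫ ν, senderGain u v η ν ∂(τ : Measure (stdSimplex ℝ S))})) :=
  exists_recovery_family_general u v η lam hlampos μ hasm

end
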